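/- arXiv:2008.00240 — 4 statements merged into one kernel-verified Lean document; each statement's English description precedes it below -/
import Mathlib

section
/- For every real α with sin(α) ≠ 0 (i.e. α not an integer multiple of π), the series ∑_{k=1}^{∞} |sin(kα)|/k diverges. -/
/-!
From `sin α = sin ((k + 1) α) cos (k α) - cos ((k + 1) α) sin (k α)` we get
`|sin α| ≤ |sin (k α)| + |sin ((k + 1) α)|`, so two consecutive terms of the series together
dominate `|sin α| / (k + 1)`. Summability would therefore make the harmonic series summable.
-/

open Real

theorem abs_sin_sub_le (x y : ℝ) : |sin (x - y)| ≤ |sin x| + |sin y| := by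
  rw [sin_sub]
  calc |sin x * cos y - cos x * sin y|
      ≤ |sin x| * |cos y| + |cos x| * |sin y| := by
        rw [← abs_mul, ← abs_mul]; exact abs_sub _ _
    _ ≤ |sin x| * 1 + 1 * |sin y| := by
        gcongr
        · exact abs_cos_le_one y
        · exact abs_cos_le_one x
    _ = |sin x| + |sin y| := by ring

theorem abs_sin_le_abs_sin_mul_add_abs_sin_succ_mul (α : ℝ) (k : ℕ) :
    |sin α| ≤ |sin (k * α)| + |sin ((k + 1) * α)| := by
  calc |sin α| = |sin ((k + 1) * α - k * α)| := by ring_nf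
    _ ≤ |sin ((k + 1) * α)| + |sin (k * α)| := abs_sin_sub_le _ _
    _ = |sin (k * α)| + |sin ((k + 1) * α)| := add_comm _ _

theorem abs_sin_div_succ_le (α : ℝ) (k : ℕ) :
    |sin α| / (k + 1) ≤ |sin (k * α)| / k + |sin ((k + 1) * α)| / (k + 1) := by
  have hk : |sin (k * α)| / (k + 1) ≤ |sin (k * α)| / k := by
    rcases k.eq_zero_or_pos with rfl | hk
    · simp
    · gcongr; linarith
  calc |sin α| / (k + 1) ≤ (|sin (k * α)| + |sin ((k + 1) * α)|) / (k + 1) := by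
        gcongr; exact abs_sin_le_abs_sin_mul_add_abs_sin_succ_mul α k
    _ = |sin (k * α)| / (k + 1) + |sin ((k + 1) * α)| / (k + 1) := add_div _ _ _
    _ ≤ _ := by gcongr

theorem stmt_4 (α : ℝ) (h : Real.sin α ≠ 0) :
    ¬ Summable (fun k : ℕ => |Real.sin (k * α)| / k) := by
  intro hs
  have hpairs : Summable (fun k : ℕ => |sin (k * α)| / k + |sin ((k + 1) * α)| / (k + 1)) := by
    refine hs.add (((summable_nat_add_iff 1).mpr hs).congr fun k => ?_)
    push_cast; rfl
  have hscaled : Summable (fun k : ℕ => |sin α| * ((k : ℝ) + 1)⁻¹) := by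
    simp_rw [← div_eq_mul_inv]
    exact hpairs.of_nonneg_of_le (fun k => by positivity) (abs_sin_div_succ_le α)
  have hharmonic : Summable (fun k : ℕ => ((k + 1 : ℕ) : ℝ)⁻¹) := by
    push_cast; exact (summable_mul_left_iff (abs_pos.mpr h).ne').mp hscaled
  exact Real.not_summable_natCast_inv ((summable_nat_add_iff 1).mp hharmonic)
end

section
/- Let 0 < m < n be integers, let t_k = (2k−1)π/(2n) and x_k = cos t_k for k = 1,…,n. Define Φ_{n,k}^m(x) = (π/n) ∑_{j=0}^{n+m−1} μ_{n,j}^m p_j(w₁,x) p_j(w₁,x_k), where μ_{n,j}^m = 1 for 0 ≤ j ≤ n−m and μ_{n,j}^m = (n+m−j)/(2m) for n−m < j < n+m. Then for t ∈ [0,π] with t ∉ {t_1,…,t_n} and x = cos t, Φ_{n,k}^m(x) = ((−1)^k/(4mn)) cos(nt) · ( sin(m(t−t_k))/sin²((t−t_k)/2) − sin(m(t+t_k))/sin²((t+t_k)/2) ). -/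
open Real

/-- Orthonormal Chebyshev polynomials of the first kind, as functions on `[-1,1]`:
`p₀ = 1/√π`, `p_j(cos t) = √(2/π) cos(jt)` for `j ≥ 1`. -/
noncomputable def chebP1 (j : ℕ) (x : ℝ) : ℝ :=
  if j = 0 then 1 / Real.sqrt π else Real.sqrt (2 / π) * Real.cos (j * Real.arccos x)

/-- The de la Vallée Poussin filter. -/
noncomputable def vpFilter (n m j : ℕ) : ℝ :=
  if j + m ≤ n then 1 else ((n : ℝ) + m - j) / (2 * m)

/-- Chebyshev nodes of the first kind: `t_k = (2k-1)π/(2n)`. -/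
noncomputable def chebNode1 (n k : ℕ) : ℝ := (2 * (k : ℝ) - 1) * π / (2 * n)

/-- Fundamental VP polynomials for `w₁`. -/
noncomputable def vpPhi1 (n m k : ℕ) (x : ℝ) : ℝ :=
  (π / n) * ∑ j ∈ Finset.range (n + m),
    vpFilter n m j * chebP1 j x * chebP1 j (Real.cos (chebNode1 n k))

/-!
For `s, t ∈ [0, π]`, `π p_j(cos s) p_j(cos t) = cos j(s - t) + cos j(s + t)`, with the
`j = 0` term halved, so `Φ_{n,k}^m(cos t)` is `(V(t - t_k) + V(t + t_k)) / n` for the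
de la Vallée Poussin kernel `V(u) = 1/2 + ∑ μ_j cos(ju)`. The kernel `V` is the mean of the
Dirichlet kernels `D_l`, `n - m ≤ l < n + m`, and `2 (1 - cos u) D_l(u) = cos(lu) - cos((l+1)u)`
telescopes, so `V(u) = sin(mu) sin(nu) / (4m sin²(u/2))`. Finally `n t_k = kπ - π/2` turns
`sin(n(t ∓ t_k))` into `±(-1)^k cos(nt)`.
-/

open Finset

noncomputable def dirichletKernel (l : ℕ) (u : ℝ) : ℝ :=
  ∑ j ∈ range (l + 1), cos (j * u) - 1 / 2

noncomputable def vpKernel (n m : ℕ) (u : ℝ) : ℝ :=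
  ∑ j ∈ range (n + m), vpFilter n m j * cos (j * u) - 1 / 2

theorem two_mul_one_sub_cos_mul_dirichletKernel (l : ℕ) (u : ℝ) :
    2 * (1 - cos u) * dirichletKernel l u = cos (l * u) - cos ((l + 1) * u) := by
  induction l with
  | zero => norm_num [dirichletKernel]; ring
  | succ l ih =>
    rw [dirichletKernel] at ih ⊢
    rw [sum_range_succ _ (l + 1)]
    have hnext : cos ((((l + 1 : ℕ) : ℝ) + 1) * u) = cos ((l + 1) * u + u) := by push_cast; ring_nf
    have hprev : cos (l * u) = cos ((l + 1) * u - u) := by ring_nf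
    rw [hnext, cos_add]
    rw [hprev, cos_sub] at ih
    push_cast
    linear_combination ih

theorem card_filter_le_Ico_eq_vpFilter {n m j : ℕ} (hmn : m ≤ n) (hj : j < n + m) :
    (#{l ∈ Ico (n - m) (n + m) | j ≤ l} : ℝ) = 2 * m * vpFilter n m j := by
  rw [Ico_filter_le, Nat.card_Ico, vpFilter]
  split_ifs with h
  · rw [max_eq_left (by omega), show n + m - (n - m) = 2 * m by omega]; push_cast; ring
  · rw [max_eq_right (by omega), Nat.cast_sub hj.le]
    have hm : (m : ℝ) ≠ 0 := by norm_cast; omega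
    push_cast; field_simp

theorem two_mul_vpKernel_eq_sum_dirichletKernel {n m : ℕ} (hmn : m ≤ n) (u : ℝ) :
    2 * m * vpKernel n m u = ∑ l ∈ Ico (n - m) (n + m), dirichletKernel l u := by
  have hpartial : ∀ l ∈ Ico (n - m) (n + m), ∑ j ∈ range (l + 1), cos (j * u)
      = ∑ j ∈ range (n + m), if j ≤ l then cos (j * u) else 0 := by
    intro l hl
    rw [mem_Ico] at hl
    rw [← sum_filter]
    congr 1; ext j; simp only [mem_range, mem_filter]; omega
  simp only [dirichletKernel]
  rw [sum_sub_distrib, sum_congr rfl hpartial, sum_comm]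
  simp only [sum_ite, sum_const_zero, add_zero, sum_const, nsmul_eq_mul]
  rw [vpKernel, Nat.card_Ico, show n + m - (n - m) = 2 * m by omega, mul_sub, mul_sum]
  congr 1
  · refine sum_congr rfl fun j hj => ?_
    rw [card_filter_le_Ico_eq_vpFilter hmn (mem_range.mp hj)]
    ring
  · push_cast; ring

theorem vpKernel_mul_sin_sq {n m : ℕ} (hmn : m ≤ n) (u : ℝ) :
    4 * m * sin (u / 2) ^ 2 * vpKernel n m u = sin (m * u) * sin (n * u) := by
  have hcos : 2 * sin (u / 2) ^ 2 = 1 - cos u := by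
    have h := cos_two_mul_eq_one_sub (u / 2)
    rw [mul_div_cancel₀ u two_ne_zero] at h
    linarith
  have htelescope : ∑ l ∈ Ico (n - m) (n + m), 2 * (1 - cos u) * dirichletKernel l u
      = cos ((n - m : ℕ) * u) - cos ((n + m : ℕ) * u) := by
    simp only [two_mul_one_sub_cos_mul_dirichletKernel]
    rw [← neg_sub_neg, ← sum_Ico_sub (fun l : ℕ => -cos (l * u)) (by omega)]
    refine sum_congr rfl fun l _ => ?_
    push_cast; ring
  calc 4 * m * sin (u / 2) ^ 2 * vpKernel n m u
      = (1 / 2) * ∑ l ∈ Ico (n - m) (n + m), 2 * (1 - cos u) * dirichletKernel l u := by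
        rw [← mul_sum, ← two_mul_vpKernel_eq_sum_dirichletKernel hmn, ← hcos]; ring
    _ = sin (m * u) * sin (n * u) := by
        rw [htelescope, Nat.cast_sub hmn, cos_sub_cos]
        push_cast
        rw [show ((n - m) * u + (n + m) * u) / 2 = n * u by ring,
          show ((n - m) * u - (n + m) * u) / 2 = -(m * u) by ring, sin_neg]
        ring

theorem vpKernel_eq {n m : ℕ} (hm : 0 < m) (hmn : m ≤ n) {u : ℝ} (hu : sin (u / 2) ≠ 0) :
    vpKernel n m u = sin (m * u) * sin (n * u) / (4 * m * sin (u / 2) ^ 2) := by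
  rw [eq_div_iff (by positivity), mul_comm]
  exact vpKernel_mul_sin_sq hmn u

theorem pi_mul_chebP1_cos_mul_chebP1_cos (j : ℕ) {s t : ℝ} (hs : s ∈ Set.Icc 0 π)
    (ht : t ∈ Set.Icc 0 π) :
    π * (chebP1 j (cos s) * chebP1 j (cos t))
      = cos (j * (s - t)) + cos (j * (s + t)) - if j = 0 then 1 else 0 := by
  rcases eq_or_ne j 0 with rfl | hj
  · simp only [chebP1, if_true, CharP.cast_eq_zero, zero_mul, cos_zero]
    rw [div_mul_div_comm, one_mul, mul_self_sqrt pi_pos.le]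
    field_simp; ring
  · simp only [chebP1, if_neg hj, arccos_cos hs.1 hs.2, arccos_cos ht.1 ht.2, mul_sub, mul_add,
      cos_sub, cos_add]
    have hsq : π * (sqrt (2 / π) * sqrt (2 / π)) = 2 := by
      rw [mul_self_sqrt (by positivity)]; field_simp
    linear_combination (cos (j * s) * cos (j * t)) * hsq

theorem vpPhi1_cos_eq {n m k : ℕ} (hn : 0 < n) (hmn : m ≤ n) {t : ℝ} (ht : t ∈ Set.Icc 0 π)
    (hk : chebNode1 n k ∈ Set.Icc 0 π) :
    vpPhi1 n m k (cos t)
      = (vpKernel n m (t - chebNode1 n k) + vpKernel n m (t + chebNode1 n k)) / n := by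
  rw [vpPhi1]
  set θ := chebNode1 n k
  have hsum : π * ∑ j ∈ range (n + m), vpFilter n m j * chebP1 j (cos t) * chebP1 j (cos θ)
      = vpKernel n m (t - θ) + vpKernel n m (t + θ) := by
    calc π * ∑ j ∈ range (n + m), vpFilter n m j * chebP1 j (cos t) * chebP1 j (cos θ)
        = ∑ j ∈ range (n + m), vpFilter n m j *
            (cos (j * (t - θ)) + cos (j * (t + θ)) - if j = 0 then 1 else 0) := by
          rw [mul_sum]
          refine sum_congr rfl fun j _ => ?_
          rw [← pi_mul_chebP1_cos_mul_chebP1_cos j ht hk]; ring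
      _ = vpKernel n m (t - θ) + vpKernel n m (t + θ) := by
          have h0 : vpFilter n m 0 = 1 := if_pos (by omega)
          simp only [mul_sub, mul_add, mul_ite, mul_one, mul_zero, sum_sub_distrib,
            sum_add_distrib, sum_ite_eq', mem_range, if_pos (show 0 < n + m by omega), h0, vpKernel]
          ring
  rw [← hsum]
  field_simp

theorem nat_mul_chebNode1 {n : ℕ} (hn : n ≠ 0) (k : ℕ) : n * chebNode1 n k = k * π - π / 2 := by
  rw [chebNode1]; field_simp

theorem chebNode1_mem_Ioo {n k : ℕ} (hk1 : 1 ≤ k) (hkn : k ≤ n) : chebNode1 n k ∈ Set.Ioo 0 π := by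
  have hk1' : (1 : ℝ) ≤ k := by exact_mod_cast hk1
  have hkn' : (k : ℝ) ≤ n := by exact_mod_cast hkn
  rw [chebNode1, Set.mem_Ioo, lt_div_iff₀ (by linarith), div_lt_iff₀ (by linarith)]
  constructor <;> nlinarith [pi_pos]

theorem sin_nat_mul_sub_chebNode1 {n : ℕ} (hn : n ≠ 0) (k : ℕ) (t : ℝ) :
    sin (n * (t - chebNode1 n k)) = (-1) ^ k * cos (n * t) := by
  rw [mul_sub, nat_mul_chebNode1 hn, show n * t - (k * π - π / 2) = n * t + π / 2 - k * π by ring,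
    sin_sub_nat_mul_pi, sin_add_pi_div_two]

theorem sin_nat_mul_add_chebNode1 {n : ℕ} (hn : n ≠ 0) (k : ℕ) (t : ℝ) :
    sin (n * (t + chebNode1 n k)) = -(-1) ^ k * cos (n * t) := by
  rw [mul_add, nat_mul_chebNode1 hn, show n * t + (k * π - π / 2) = n * t - π / 2 + k * π by ring,
    sin_add_nat_mul_pi, sin_sub_pi_div_two]
  ring

/-- compact trigonometric form of the fundamental VP polynomials for `w₁`. -/
theorem stmt_9 (m n : ℕ) (hm : 0 < m) (hmn : m < n)
    (k : ℕ) (hk1 : 1 ≤ k) (hkn : k ≤ n)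
    (t : ℝ) (ht : t ∈ Set.Icc 0 π)
    (htk : ∀ k' : ℕ, 1 ≤ k' → k' ≤ n → t ≠ chebNode1 n k') :
    vpPhi1 n m k (Real.cos t) =
      ((-1 : ℝ) ^ k / (4 * m * n)) * Real.cos (n * t) *
        (Real.sin (m * (t - chebNode1 n k)) / Real.sin ((t - chebNode1 n k) / 2) ^ 2
          - Real.sin (m * (t + chebNode1 n k)) / Real.sin ((t + chebNode1 n k) / 2) ^ 2) := by
  have hn : n ≠ 0 := by omega
  obtain ⟨hθ0, hθπ⟩ := chebNode1_mem_Ioo hk1 hkn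
  have hsub : sin ((t - chebNode1 n k) / 2) ≠ 0 := by
    rw [Ne, sin_eq_zero_iff_of_lt_of_lt (by linarith [ht.1]) (by linarith [ht.2]), div_eq_zero_iff,
      sub_eq_zero]
    exact fun h => h.elim (htk k hk1 hkn) (by norm_num)
  have hadd : sin ((t + chebNode1 n k) / 2) ≠ 0 :=
    (sin_pos_of_pos_of_lt_pi (by linarith [ht.1]) (by linarith [ht.2])).ne'
  rw [vpPhi1_cos_eq (by omega) hmn.le ht ⟨hθ0.le, hθπ.le⟩, vpKernel_eq hm hmn.le hsub,
    vpKernel_eq hm hmn.le hadd, sin_nat_mul_sub_chebNode1 hn, sin_nat_mul_add_chebNode1 hn]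
  field_simp
  ring
end

section
/- Let 0 < m < n, let x_1,…,x_n be the zeros of the n-th Chebyshev polynomial of the first kind, and let Φ_{n,k}^m(x) = (π/n) ∑_{j=0}^{n+m−1} μ_{n,j}^m p_j(w₁,x) p_j(w₁,x_k) with the de la Vallée Poussin filter μ_{n,j}^m. Then Φ_{n,k}^m(x_h) = δ_{k,h} for all h,k = 1,…,n; i.e. the fundamental VP polynomials interpolate like the Lagrange fundamental polynomials. -/
open Real

/-! At the nodes, `p_j(x_h) p_j(x_k)` is a combination of `cos(j(θ_h - θ_k))` and
`cos(j(θ_h + θ_k))`, and `θ_h ∓ θ_k` are integer multiples `rπ/n`, so everything reduces to the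
filtered cosine sum `∑ μ_j cos(jrπ/n)`. Since `μ_j + μ_{2n-j} = 1` and
`cos((2n-j)rπ/n) = cos(jrπ/n)`, pairing `j` with `2n - j` shows that this sum is half of
`1 + ∑_{j<2n} cos(jrπ/n)`, that is `n + 1/2` if `2n ∣ r` and `1/2` otherwise. -/

open Finset

theorem sum_range_cos_int_mul_pi_div {n : ℕ} (hn : n ≠ 0) (r : ℤ) :
    ∑ j ∈ range (2 * n), cos (r * π / n * j) = if (2 * n : ℤ) ∣ r then (2 * n : ℝ) else 0 := by
  split_ifs with hr
  · obtain ⟨q, rfl⟩ := hr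
    have hcos : ∀ j : ℕ, cos ((2 * n * q : ℝ) * π / n * j) = 1 := fun j => by
      rw [← cos_int_mul_two_pi (q * j)]
      congr 1
      push_cast
      field_simp
    push_cast
    simp [hcos]
  · have ha : ∀ k : ℤ, r * π / n ≠ k * (2 * π) := by
      intro k hk
      refine hr ⟨k, ?_⟩
      field_simp at hk
      exact_mod_cast (show (r : ℝ) = 2 * n * k by linear_combination hk)
    -- In Lagrange's formula the numerator `sin (2n · (rπ/n) / 2) = sin (rπ)` vanishes.
    have hlagrange := sum_cos (2 * n) ha 0
    have hnum : ((2 * n : ℕ) : ℝ) * (r * π / n) / 2 = r * π := by push_cast; field_simp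
    simp only [add_zero] at hlagrange
    rw [hlagrange, hnum, sin_int_mul_pi, zero_mul, zero_div]

theorem two_mul_sum_mul_of_add_reflect_eq_one {R : Type*} [CommRing R] {N : ℕ} {a c : ℕ → R}
    (ha : ∀ j ≤ N, a j + a (N - j) = 1) (hc : ∀ j ≤ N, c (N - j) = c j) :
    2 * ∑ j ∈ range (N + 1), a j * c j = ∑ j ∈ range (N + 1), c j := by
  have hreflect : ∑ j ∈ range (N + 1), a (N - j) * c (N - j) = ∑ j ∈ range (N + 1), a j * c j := by
    simpa using sum_range_reflect (fun j => a j * c j) (N + 1)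
  calc 2 * ∑ j ∈ range (N + 1), a j * c j
      = ∑ j ∈ range (N + 1), a j * c j + ∑ j ∈ range (N + 1), a (N - j) * c (N - j) := by
        rw [hreflect]; ring
    _ = ∑ j ∈ range (N + 1), c j := by
        rw [← sum_add_distrib]
        refine sum_congr rfl fun j hj => ?_
        have hjN : j ≤ N := Nat.lt_succ_iff.mp (mem_range.mp hj)
        rw [hc j hjN, ← add_mul, ha j hjN, one_mul]

-- The filter is cut off at `n + m`, beyond which its formula turns negative.
theorem vpFilter_add_vpFilter_reflect {n m j : ℕ} (hm : 0 < m) (hj : j ≤ 2 * n) :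
    (if j < n + m then vpFilter n m j else 0)
      + (if 2 * n - j < n + m then vpFilter n m (2 * n - j) else 0) = 1 := by
  have hm' : (m : ℝ) ≠ 0 := by positivity
  unfold vpFilter
  by_cases h1 : j + m ≤ n
  · simp [h1, show j < n + m by omega, show ¬ 2 * n - j < n + m by omega]
  by_cases h2 : n + m ≤ j
  · simp [show ¬ j < n + m by omega, show 2 * n - j < n + m by omega,
      show 2 * n - j + m ≤ n by omega]
  simp only [show j < n + m by omega, show 2 * n - j < n + m by omega, h1,
    show ¬ 2 * n - j + m ≤ n by omega, if_true, if_false]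
  rw [Nat.cast_sub hj]
  field_simp
  push_cast
  ring

theorem sum_vpFilter_mul_cos_int_mul_pi_div {n m : ℕ} (hm : 0 < m) (hmn : m ≤ n) (r : ℤ) :
    ∑ j ∈ range (n + m), vpFilter n m j * cos (r * π / n * j)
      = if (2 * n : ℤ) ∣ r then (n + 1 / 2 : ℝ) else 1 / 2 := by
  set c : ℕ → ℝ := fun j => cos (r * π / n * j)
  have hn : n ≠ 0 := by omega
  have htrunc : ∑ j ∈ range (n + m), vpFilter n m j * c j
      = ∑ j ∈ range (2 * n + 1), (if j < n + m then vpFilter n m j else 0) * c j := by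
    simp_rw [ite_mul, zero_mul]
    rw [← sum_filter]
    congr 1
    ext j
    simp only [mem_range, mem_filter]
    omega
  have hc : ∀ j ≤ 2 * n, c (2 * n - j) = c j := fun j hj => by
    simp only [c]
    rw [← cos_int_mul_two_pi_sub _ r]
    congr 1
    rw [Nat.cast_sub hj]
    push_cast
    field_simp
    ring
  have hc2n : c (2 * n) = 1 := by
    simpa [c] using (hc (2 * n) le_rfl).symm
  have h := two_mul_sum_mul_of_add_reflect_eq_one
    (a := fun j => if j < n + m then vpFilter n m j else 0)
    (fun j hj => vpFilter_add_vpFilter_reflect hm hj) hc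
  rw [sum_range_succ c, hc2n,
    show ∑ j ∈ range (2 * n), c j = _ from sum_range_cos_int_mul_pi_div hn r] at h
  rw [htrunc]
  split_ifs at h ⊢ <;> linarith

theorem chebP1_cos_mul_chebP1_cos {s t : ℝ} (hs : s ∈ Set.Icc 0 π) (ht : t ∈ Set.Icc 0 π) (j : ℕ) :
    chebP1 j (cos s) * chebP1 j (cos t)
      = (cos ((s - t) * j) + cos ((s + t) * j) - if j = 0 then 1 else 0) / π := by
  have hπ : π ≠ 0 := pi_ne_zero
  rcases eq_or_ne j 0 with rfl | hj
  · have hsqrt : sqrt π ^ 2 = π := sq_sqrt pi_pos.le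
    simp only [chebP1, if_true, Nat.cast_zero, mul_zero, cos_zero]
    field_simp
    rw [hsqrt]
    ring
  · have hsqrt : sqrt (2 / π) ^ 2 = 2 / π := sq_sqrt (by positivity)
    simp only [chebP1, if_neg hj, arccos_cos hs.1 hs.2, arccos_cos ht.1 ht.2, sub_zero]
    rw [sub_mul, add_mul, cos_sub, cos_add]
    linear_combination (norm := (field_simp; ring)) (cos (j * s) * cos (j * t)) * hsqrt

theorem chebNode1_mem_Icc {n k : ℕ} (hk1 : 1 ≤ k) (hkn : k ≤ n) : chebNode1 n k ∈ Set.Icc 0 π := by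
  have hk1' : (1 : ℝ) ≤ k := by exact_mod_cast hk1
  have hkn' : (k : ℝ) ≤ n := by exact_mod_cast hkn
  unfold chebNode1
  constructor
  · exact div_nonneg (mul_nonneg (by linarith) pi_pos.le) (by positivity)
  · rw [div_le_iff₀ (by linarith)]
    nlinarith [pi_pos]

theorem chebNode1_sub_chebNode1 (n h k : ℕ) :
    chebNode1 n h - chebNode1 n k = ((h - k : ℤ) : ℝ) * π / n := by
  unfold chebNode1
  push_cast
  ring

theorem chebNode1_add_chebNode1 (n h k : ℕ) :
    chebNode1 n h + chebNode1 n k = ((h + k - 1 : ℤ) : ℝ) * π / n := by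
  unfold chebNode1
  push_cast
  ring

/-- the fundamental VP polynomials for `w₁` interpolate at the
Chebyshev nodes of the first kind exactly like the fundamental Lagrange polynomials:
`Φ_{n,k}^m(x_h) = δ_{k,h}`. -/
theorem stmt_12 (m n : ℕ) (hm : 0 < m) (hmn : m < n)
    (k h : ℕ) (hk1 : 1 ≤ k) (hkn : k ≤ n) (hh1 : 1 ≤ h) (hhn : h ≤ n) :
    vpPhi1 n m k (Real.cos (chebNode1 n h)) = if k = h then 1 else 0 := by
  have hn : (n : ℝ) ≠ 0 := Nat.cast_ne_zero.mpr (by omega)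
  have hfilter0 : vpFilter n m 0 = 1 := if_pos (by omega)
  have hpos : 0 < n + m := by omega
  have hdiff : (2 * n : ℤ) ∣ (h - k : ℤ) ↔ k = h := by
    refine ⟨fun hdvd => ?_, fun hkh => by simp [hkh]⟩
    have := Int.eq_zero_of_abs_lt_dvd hdvd (by rw [abs_lt]; omega)
    omega
  have hsum : ¬ (2 * n : ℤ) ∣ (h + k - 1 : ℤ) := fun hdvd => by
    have := Int.le_of_dvd (by omega) hdvd
    omega
  simp only [vpPhi1, mul_assoc, chebP1_cos_mul_chebP1_cos (chebNode1_mem_Icc hh1 hhn)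
    (chebNode1_mem_Icc hk1 hkn), chebNode1_sub_chebNode1, chebNode1_add_chebNode1,
    mul_div_assoc', mul_sub, mul_add, ← sum_div, sum_sub_distrib, sum_add_distrib,
    sum_vpFilter_mul_cos_int_mul_pi_div hm hmn.le, mul_ite, mul_one, mul_zero, sum_ite_eq',
    mem_range, hpos, hfilter0, hdiff, hsum, if_true, if_false]
  split_ifs <;> field_simp <;> ring
end

section
/- Let 0 < m < n, let x_1,…,x_n be the zeros of the n-th Chebyshev polynomial of the first kind and Φ_{n,k}^m the fundamental VP polynomials for w₁. Define V_n^m f(x) = ∑_{k=1}^n f(x_k) Φ_{n,k}^m(x). Then V_n^m P = P for every algebraic polynomial P of degree at most n−m. -/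
open Real

/-!
On `[-1, 1]` the orthonormal polynomial `p_j` is a constant multiple of the Chebyshev polynomial
`T_j`. Gauss–Chebyshev quadrature at the `n` nodes is exact in degree `< 2n`, so the discrete inner
products `(π/n) ∑ₖ p_i(x_k) p_j(x_k)` equal the continuous ones, `δ_ij`, whenever `i + j < 2n`.
For `l ≤ n - m` this covers every `j < n + m`, hence `V_n^m p_l = μ_l p_l = p_l`. As `V_n^m` is
linear and `T_0, …, T_{n-m}` span the polynomials of degree `≤ n - m`, the theorem follows.
-/

open Polynomial Polynomial.Chebyshev Finset

noncomputable def chebP1Scale (j : ℕ) : ℝ := if j = 0 then 1 / √π else √(2 / π)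

lemma chebP1Scale_pos (j : ℕ) : 0 < chebP1Scale j := by
  unfold chebP1Scale; split_ifs <;> positivity

lemma chebP1_eq_mul_eval_T {y : ℝ} (hy : y ∈ Set.Icc (-1) 1) (j : ℕ) :
    chebP1 j y = chebP1Scale j * (T ℝ j).eval y := by
  have hT := T_real_cos (arccos y) j
  rw [cos_arccos hy.1 hy.2] at hT
  rw [hT, chebP1, chebP1Scale]
  split_ifs <;> simp_all

lemma chebP1Scale_mul_integral_eval_T_mul_eval_T (i j : ℕ) :
    chebP1Scale i * chebP1Scale j * ∫ x, (T ℝ i).eval x * (T ℝ j).eval x ∂measureT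
      = if i = j then 1 else 0 := by
  rcases eq_or_ne i j with rfl | hij
  · rcases eq_or_ne i 0 with rfl | hi
    · rw [Nat.cast_zero, integral_eval_T_real_mul_self_measureT_zero, chebP1Scale, if_pos rfl,
        if_pos rfl, ← sq, div_pow, sq_sqrt pi_pos.le]
      field_simp
    · rw [integral_T_real_mul_self_measureT_of_ne_zero hi, chebP1Scale, if_neg hi, if_pos rfl,
        ← sq, sq_sqrt (by positivity)]
      field_simp
  · rw [integral_eval_T_real_mul_eval_T_real_measureT_of_ne hij, mul_zero, if_neg hij]

lemma sum_eval_chebNode1_eq_integral {n : ℕ} (hn : n ≠ 0) {Q : ℝ[X]} (hQ : Q.degree < 2 * n) :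
    π / n * ∑ k ∈ Icc 1 n, Q.eval (cos (chebNode1 n k)) = ∫ x, Q.eval x ∂measureT := by
  rw [integral_eq_sumZeroes hn hQ, sumZeroes, ← Ico_add_one_right_eq_Icc, sum_Ico_eq_sum_range,
    Nat.add_sub_cancel]
  congr! 4 with i
  unfold chebNode1
  push_cast
  ring

lemma sum_chebP1_mul_chebP1 {n i j : ℕ} (hij : i + j < 2 * n) :
    π / n * ∑ k ∈ Icc 1 n, chebP1 i (cos (chebNode1 n k)) * chebP1 j (cos (chebNode1 n k))
      = if i = j then 1 else 0 := by
  have hdeg : (T ℝ i * T ℝ j).degree < 2 * n := by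
    rw [degree_mul, degree_T, degree_T]
    exact_mod_cast hij
  calc π / n * ∑ k ∈ Icc 1 n, chebP1 i (cos (chebNode1 n k)) * chebP1 j (cos (chebNode1 n k))
      = chebP1Scale i * chebP1Scale j *
          (π / n * ∑ k ∈ Icc 1 n, (T ℝ i * T ℝ j).eval (cos (chebNode1 n k))) := by
        simp only [mul_sum, chebP1_eq_mul_eval_T (cos_mem_Icc _), eval_mul]
        congr! 1 with k
        ring
    _ = if i = j then 1 else 0 := by
        rw [sum_eval_chebNode1_eq_integral (by omega) hdeg]
        simp only [eval_mul]
        exact chebP1Scale_mul_integral_eval_T_mul_eval_T i j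

lemma vpFilter_of_add_le {n m j : ℕ} (h : j + m ≤ n) : vpFilter n m j = 1 := if_pos h

lemma sum_chebP1_mul_vpPhi1 {n m l : ℕ} (hm : 0 < m) (hl : l + m ≤ n) (x : ℝ) :
    ∑ k ∈ Icc 1 n, chebP1 l (cos (chebNode1 n k)) * vpPhi1 n m k x = chebP1 l x := by
  calc ∑ k ∈ Icc 1 n, chebP1 l (cos (chebNode1 n k)) * vpPhi1 n m k x
      = ∑ j ∈ range (n + m), vpFilter n m j * chebP1 j x * (π / n *
          ∑ k ∈ Icc 1 n, chebP1 l (cos (chebNode1 n k)) * chebP1 j (cos (chebNode1 n k))) := by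
        simp only [vpPhi1, mul_sum]
        rw [sum_comm]
        congr! 2 with j
        ring
    _ = ∑ j ∈ range (n + m), vpFilter n m j * chebP1 j x * if l = j then 1 else 0 :=
        sum_congr rfl fun j hj => by rw [sum_chebP1_mul_chebP1 (by rw [mem_range] at hj; omega)]
    _ = chebP1 l x := by
        simp [mem_range, show l < n + m by omega, vpFilter_of_add_le hl]

noncomputable def vpInterp1 (n m : ℕ) (x : ℝ) : ℝ[X] →ₗ[ℝ] ℝ :=
  ∑ k ∈ Icc 1 n, vpPhi1 n m k x • leval (cos (chebNode1 n k))

lemma vpInterp1_apply (n m : ℕ) (x : ℝ) (Q : ℝ[X]) :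
    vpInterp1 n m x Q = ∑ k ∈ Icc 1 n, Q.eval (cos (chebNode1 n k)) * vpPhi1 n m k x := by
  simp [vpInterp1, mul_comm]

lemma vpInterp1_T {n m l : ℕ} (hm : 0 < m) (hl : l + m ≤ n) {x : ℝ} (hx : x ∈ Set.Icc (-1) 1) :
    vpInterp1 n m x (T ℝ l) = (T ℝ l).eval x := by
  have hT {y : ℝ} (hy : y ∈ Set.Icc (-1) 1) : (T ℝ l).eval y = (chebP1Scale l)⁻¹ * chebP1 l y := by
    rw [chebP1_eq_mul_eval_T hy, inv_mul_cancel_left₀ (chebP1Scale_pos l).ne']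
  simp only [vpInterp1_apply, hT (cos_mem_Icc _), hT hx, mul_assoc, ← mul_sum,
    sum_chebP1_mul_vpPhi1 hm hl]

/-- the VP interpolation operator
`V_n^m f = ∑_{k=1}^n f(x_k) Φ_{n,k}^m` at the Chebyshev nodes of the first kind
reproduces every polynomial of degree at most `n - m`. -/
theorem stmt_13 (m n : ℕ) (hm : 0 < m) (hmn : m < n)
    (P : Polynomial ℝ) (hP : P.degree ≤ (n - m : ℕ))
    (x : ℝ) (hx : x ∈ Set.Icc (-1 : ℝ) 1) :
    ∑ k ∈ Finset.Icc 1 n, P.eval (Real.cos (chebNode1 n k)) * vpPhi1 n m k x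
      = P.eval x := by
  have hspan : P ∈ Submodule.span ℝ (chebyshevTsequence ℝ '' Set.Iic (n - m)) := by
    rw [Sequence.span_degreeLE _ (by simp)]
    exact mem_degreeLE.mpr hP
  have hT : Set.EqOn (vpInterp1 n m x) (leval x) (chebyshevTsequence ℝ '' Set.Iic (n - m)) := by
    rintro _ ⟨l, hl, rfl⟩
    exact vpInterp1_T hm (by rw [Set.mem_Iic] at hl; omega) hx
  simpa [vpInterp1_apply] using LinearMap.eqOn_span hT hspan
end
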